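/- arXiv:1902.00196 — 4 statements merged into one kernel-verified Lean document; each statement's English description precedes it below -/
import Mathlib

section
/- A finite normal functor F : CohI^n → CohI has only finitely many uniform families of cliques. -/
open CategoryTheory Limits

/-- A coherence space: a web together with a reflexive symmetric coherence relation. -/
structure CohSpace : Type 1 where
  web : Type
  coh : web → web → Prop
  refl : ∀ x, coh x x
  symm : ∀ {x y}, coh x y → coh y x

/-- An embedding of coherence spaces: an injection preserving and reflecting coherence. -/
@[ext]
structure CohEmb (X Y : CohSpace) : Type where
  toFun : X.web → Y.web
  inj : Function.Injective toFun
  coh_iff : ∀ x x', X.coh x x' ↔ Y.coh (toFun x) (toFun x')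

/-- The category `CohI` of coherence spaces and embeddings. -/
instance : Category CohSpace where
  Hom := CohEmb
  id X := ⟨id, fun _ _ h => h, fun _ _ => Iff.rfl⟩
  comp f g := ⟨g.toFun ∘ f.toFun, g.inj.comp f.inj,
    fun x x' => (f.coh_iff x x').trans (g.coh_iff _ _)⟩
  id_comp _ := rfl
  comp_id _ := rfl
  assoc _ _ _ := rfl

/-- A clique: a set of pairwise coherent points. -/
def CohSpace.IsClique (X : CohSpace) (c : Set X.web) : Prop :=
  ∀ ⦃x⦄, x ∈ c → ∀ ⦃y⦄, y ∈ c → X.coh x y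

/-- Linear negation (dual) of a coherence space. -/
def CohSpace.dual (X : CohSpace) : CohSpace where
  web := X.web
  coh x y := x = y ∨ ¬ X.coh x y
  refl _ := Or.inl rfl
  symm h := h.elim (fun h' => Or.inl h'.symm) (fun h' => Or.inr fun hc => h' (X.symm hc))

/-- Tensor product of coherence spaces. -/
def CohSpace.tens (X Y : CohSpace) : CohSpace where
  web := X.web × Y.web
  coh p q := X.coh p.1 q.1 ∧ Y.coh p.2 q.2
  refl p := ⟨X.refl p.1, Y.refl p.2⟩
  symm h := ⟨X.symm h.1, Y.symm h.2⟩

/-- Direct sum (`⊕`) of coherence spaces. -/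
def CohSpace.sum (X Y : CohSpace) : CohSpace where
  web := X.web ⊕ Y.web
  coh := Sum.LiftRel X.coh Y.coh
  refl x := by cases x with
    | inl a => exact Sum.LiftRel.inl (X.refl a)
    | inr b => exact Sum.LiftRel.inr (Y.refl b)
  symm h := by cases h with
    | inl h => exact Sum.LiftRel.inl (X.symm h)
    | inr h => exact Sum.LiftRel.inr (Y.symm h)

/-- Linear implication `X ⊸ Y := (X ⊗ Y^⊥)^⊥`. -/
def CohSpace.lolly (X Y : CohSpace) : CohSpace := (X.tens Y.dual).dual

/-- The with connective `X & Y := (X^⊥ ⊕ Y^⊥)^⊥`. -/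
def CohSpace.withc (X Y : CohSpace) : CohSpace := (X.dual.sum Y.dual).dual

/-- The one-point coherence space (interpretation of `1` and `⊥`). -/
def oneCoh : CohSpace where
  web := PUnit
  coh _ _ := True
  refl _ := trivial
  symm _ := trivial

/-- The empty coherence space (interpretation of `0` and `⊤`). -/
def topCoh : CohSpace where
  web := Empty
  coh x _ := x.elim
  refl x := x.elim
  symm {x} _ := x.elim

/-- The induced embedding between duals. -/
def CohEmb.dualMap {X Y : CohSpace} (f : X ⟶ Y) : X.dual ⟶ Y.dual where
  toFun := f.toFun
  inj := f.inj
  coh_iff x x' := by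
    constructor
    · rintro (rfl | h)
      · exact Or.inl rfl
      · exact Or.inr fun hc => h ((f.coh_iff _ _).2 hc)
    · rintro (h | h)
      · exact Or.inl (f.inj h)
      · exact Or.inr fun hc => h ((f.coh_iff _ _).1 hc)

/-- The induced embedding between tensor products. -/
def CohEmb.tensMap {X X' Y Y' : CohSpace} (f : X ⟶ X') (g : Y ⟶ Y') :
    X.tens Y ⟶ X'.tens Y' where
  toFun := Prod.map f.toFun g.toFun
  inj := f.inj.prodMap g.inj
  coh_iff p q := and_congr (f.coh_iff _ _) (g.coh_iff _ _)

/-- The induced embedding between direct sums. -/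
def CohEmb.sumMap {X X' Y Y' : CohSpace} (f : X ⟶ X') (g : Y ⟶ Y') :
    X.sum Y ⟶ X'.sum Y' where
  toFun := Sum.map f.toFun g.toFun
  inj := f.inj.sumMap g.inj
  coh_iff x x' := by
    constructor
    · intro h
      cases h with
      | inl h => exact Sum.LiftRel.inl ((f.coh_iff _ _).1 h)
      | inr h => exact Sum.LiftRel.inr ((g.coh_iff _ _).1 h)
    · intro h
      cases x with
      | inl a => cases x' with
        | inl a' => exact Sum.LiftRel.inl ((f.coh_iff _ _).2 (by cases h; assumption))
        | inr b' => exact absurd h (by intro hh; cases hh)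
      | inr b => cases x' with
        | inl a' => exact absurd h (by intro hh; cases hh)
        | inr b' => exact Sum.LiftRel.inr ((g.coh_iff _ _).2 (by cases h; assumption))

/-- Linear negation as a covariant endofunctor of `CohI`. -/
def dualFunctor : CohSpace ⥤ CohSpace where
  obj := CohSpace.dual
  map := CohEmb.dualMap
  map_id _ := rfl
  map_comp _ _ := rfl

/-- Tensor as a functor on the product category. -/
def tensorFunctor : CohSpace × CohSpace ⥤ CohSpace where
  obj p := p.1.tens p.2
  map f := CohEmb.tensMap f.1 f.2
  map_id _ := rfl
  map_comp _ _ := rfl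

/-- Sum as a functor on the product category. -/
def sumFunctor : CohSpace × CohSpace ⥤ CohSpace where
  obj p := p.1.sum p.2
  map f := CohEmb.sumMap f.1 f.2
  map_id p := by
    apply CohEmb.ext
    funext x
    cases x <;> rfl
  map_comp f g := by
    apply CohEmb.ext
    funext x
    cases x <;> rfl

/-- The category `CohI^n`. -/
abbrev CohTuple (n : ℕ) := Fin n → CohSpace

/-- A normal functor: one preserving filtered colimits and finite pullbacks. -/
def IsNormalFunctor {C : Type*} {D : Type*} [Category C] [Category D] (F : C ⥤ D) : Prop :=
  PreservesFilteredColimits F ∧ PreservesLimitsOfShape WalkingCospan F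

/-- The web functor `CohI ⥤ Set`. -/
def webF : CohSpace ⥤ Type where
  obj X := X.web
  map f := TypeCat.ofHom f.toFun
  map_id _ := rfl
  map_comp _ _ := rfl

/-- The category of elements of the web presheaf `|F|` of `F : CohI^n ⥤ CohI`. -/
abbrev Elts {n : ℕ} (F : CohTuple n ⥤ CohSpace) := (F ⋙ webF).Elements

/-- `(X⃗, x)` is a normal form of `F`: its webs are finite and it is initial in its own
slice category of `El(|F|)`. -/
def IsNormalForm {n : ℕ} {F : CohTuple n ⥤ CohSpace} (e : Elts F) : Prop :=
  (∀ i, Finite (e.1 i).web) ∧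
    ∀ (f : Elts F) (u : f ⟶ e), ∃! v : e ⟶ f, v ≫ u = 𝟙 e

/-- The pointwise dual functor `F^⊥`. -/
def dualF {n : ℕ} (F : CohTuple n ⥤ CohSpace) : CohTuple n ⥤ CohSpace := F ⋙ dualFunctor

/-- The pointwise tensor functor `F ⊗ G`. -/
def tensF {n : ℕ} (F G : CohTuple n ⥤ CohSpace) : CohTuple n ⥤ CohSpace :=
  F.prod' G ⋙ tensorFunctor

/-- The pointwise sum functor `F ⊕ G`. -/
def sumF {n : ℕ} (F G : CohTuple n ⥤ CohSpace) : CohTuple n ⥤ CohSpace :=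
  F.prod' G ⋙ sumFunctor

/-- The pointwise linear implication functor `F ⊸ G`. -/
def lollyF {n : ℕ} (F G : CohTuple n ⥤ CohSpace) : CohTuple n ⥤ CohSpace :=
  dualF (tensF F (dualF G))

/-- The degree of a normal functor: the supremum of the cardinalities of the webs
occurring in its normal forms. -/
noncomputable def degree {n : ℕ} (F : CohTuple n ⥤ CohSpace) : ℕ∞ :=
  ⨆ (e : Elts F) (_ : IsNormalForm e) (i : Fin n), (Nat.card (e.1 i).web : ℕ∞)

/-- `F` sends coherence spaces with finite webs to coherence spaces with finite webs. -/
def PreservesFiniteWebs {n : ℕ} (F : CohTuple n ⥤ CohSpace) : Prop :=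
  ∀ X : CohTuple n, (∀ i, Finite (X i).web) → Finite (F.obj X).web

/-- A finite normal functor: one preserving finiteness of webs and of finite degree. -/
def IsFiniteFunctor {n : ℕ} (F : CohTuple n ⥤ CohSpace) : Prop :=
  PreservesFiniteWebs F ∧ degree F < ⊤

/-- `NF(F)`: the set of isomorphism classes of normal forms of `F`. -/
def NFSet {n : ℕ} (F : CohTuple n ⥤ CohSpace) :
    Set (Quotient (isIsomorphicSetoid (Elts F))) :=
  { q | ∃ e : Elts F, IsNormalForm e ∧ Quotient.mk _ e = q }

/-- A uniform family of cliques of `F : CohI^n ⥤ CohI`. -/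
def IsUniformFamily {n : ℕ} (F : CohTuple n ⥤ CohSpace)
    (c : ∀ X : CohTuple n, Set (F.obj X).web) : Prop :=
  (∀ X, (F.obj X).IsClique (c X)) ∧
    ∀ (X Y : CohTuple n) (ι : X ⟶ Y), c X = (F.map ι).toFun ⁻¹' c Y

/-- Coherence of two normal forms: all their instantiations along embeddings into a
common tuple are coherent. -/
def NFCoherent {n : ℕ} {F : CohTuple n ⥤ CohSpace} (e e' : Elts F) : Prop :=
  ∀ (Z : CohTuple n) (ι : e.1 ⟶ Z) (κ : e'.1 ⟶ Z),
    (F.obj Z).coh ((F.map ι).toFun e.2) ((F.map κ).toFun e'.2)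

/-- A coherence space structure on a canonical finite web `Fin k`. -/
structure FinCohData where
  k : ℕ
  r : Fin k → Fin k → Prop
  refl : ∀ i, r i i
  symm : ∀ {i j}, r i j → r j i

/-- The coherence space associated to a `FinCohData`. -/
def FinCohData.toCoh (d : FinCohData) : CohSpace where
  web := Fin d.k
  coh := d.r
  refl := d.refl
  symm := d.symm

/-- A canonical tuple of finite coherence spaces. -/
def canonTuple {n : ℕ} (d : Fin n → FinCohData) : CohTuple n := fun i => (d i).toCoh

/-- Self-coherent normal forms of `F` carried by canonical tuples of finite coherence
spaces; the web of the trace is the set of their isomorphism classes. -/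
def CanonNF {n : ℕ} (F : CohTuple n ⥤ CohSpace) : Type :=
  Σ d : Fin n → FinCohData,
    { x : (F.obj (canonTuple d)).web //
        IsNormalForm (F := F) ⟨canonTuple d, x⟩ ∧
          NFCoherent (F := F) ⟨canonTuple d, x⟩ ⟨canonTuple d, x⟩ }

/-- The element of `El(|F|)` carried by a canonical normal form. -/
def CanonNF.toElts {n : ℕ} {F : CohTuple n ⥤ CohSpace} (c : CanonNF F) : Elts F :=
  ⟨canonTuple c.1, c.2.1⟩

/-- Canonical normal forms are identified when isomorphic in `El(|F|)`. -/
def traceSetoid {n : ℕ} (F : CohTuple n ⥤ CohSpace) : Setoid (CanonNF F) :=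
  (isIsomorphicSetoid (Elts F)).comap CanonNF.toElts

/-- The trace `Tr(F)`: isomorphism classes of self-coherent normal forms, with the
coherence relation between normal forms. -/
def Tr {n : ℕ} (F : CohTuple n ⥤ CohSpace) : CohSpace where
  web := Quotient (traceSetoid F)
  coh q q' := ∃ c c' : CanonNF F,
    Quotient.mk (traceSetoid F) c = q ∧ Quotient.mk (traceSetoid F) c' = q' ∧
      NFCoherent c.toElts c'.toElts
  refl q := by
    obtain ⟨c, rfl⟩ := Quotient.exists_rep q
    exact ⟨c, c, rfl, rfl, c.2.2.2⟩
  symm h := by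
    obtain ⟨c, c', h1, h2, h3⟩ := h
    exact ⟨c', c, h2, h1, fun Z ι κ => (F.obj Z).symm (h3 Z κ ι)⟩

/-- The family of functors whose pointwise pairing computes `Z ↦ (X₁,…,Xₙ,Z)`. -/
def gfam {n : ℕ} (X : CohTuple n) (i : Fin (n + 1)) : CohTuple 1 ⥤ CohSpace :=
  if h : (i : ℕ) < n then (Functor.const (CohTuple 1)).obj (X ⟨i, h⟩)
  else Pi.eval (fun _ : Fin 1 => CohSpace) 0

/-- The partial application `F(X₁,…,Xₙ,−)` of `F : CohI^(n+1) ⥤ CohI`. -/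
def partialApp {n : ℕ} (F : CohTuple (n + 1) ⥤ CohSpace) (X : CohTuple n) :
    CohTuple 1 ⥤ CohSpace :=
  Functor.pi' (gfam X) ⋙ F

/-- The embedding `(X⃗, Z) ↪ (Y⃗, Z)` induced componentwise by `ι : X⃗ ↪ Y⃗`. -/
def extHom {n : ℕ} {X Y : CohTuple n} (ι : X ⟶ Y) (Z : CohTuple 1) (i : Fin (n + 1)) :
    (gfam X i).obj Z ⟶ (gfam Y i).obj Z := by
  by_cases h : (i : ℕ) < n
  · simp only [gfam, dif_pos h]
    exact ι ⟨i, h⟩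
  · simp only [gfam, dif_neg h]
    exact 𝟙 (Z 0)

/-- The embedding `extHom` as a morphism in `CohI^(n+1)`. -/
def extHomPi {n : ℕ} {X Y : CohTuple n} (ι : X ⟶ Y) (Z : CohTuple 1) :
    (Functor.pi' (gfam X)).obj Z ⟶ (Functor.pi' (gfam Y)).obj Z :=
  fun i => extHom ι Z i

/-- Transport along an object equality `G.obj X = Tr (partialApp F X)`. -/
def trWebCast {n : ℕ} {F : CohTuple (n + 1) ⥤ CohSpace} {G : CohTuple n ⥤ CohSpace}
    (h : ∀ X, G.obj X = Tr (partialApp F X)) (X : CohTuple n) :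
    (Tr (partialApp F X)).web → (G.obj X).web :=
  fun q => cast (congrArg CohSpace.web (h X)).symm q

/-- `G` acts on embeddings the way `∀(F)` does: normal forms are transported by
keeping the bound variables and substituting along `ι` on the free ones. -/
def ForallAction {n : ℕ} (F : CohTuple (n + 1) ⥤ CohSpace) (G : CohTuple n ⥤ CohSpace)
    (hobj : ∀ X, G.obj X = Tr (partialApp F X)) : Prop :=
  ∀ (X Y : CohTuple n) (ι : X ⟶ Y) (c : CanonNF (partialApp F X)),
    ∃ c' : CanonNF (partialApp F Y),
      (G.map ι).toFun (trWebCast hobj X (Quotient.mk (traceSetoid _) c))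
          = trWebCast hobj Y (Quotient.mk (traceSetoid _) c') ∧
        c'.1 = c.1 ∧
        HEq c'.2.1 ((F.map (extHomPi ι (canonTuple c.1))).toFun c.2.1)

/-- `G` is (a presentation of) the functor `∀(F)`. -/
def IsForallExtension {n : ℕ} (F : CohTuple (n + 1) ⥤ CohSpace)
    (G : CohTuple n ⥤ CohSpace) : Prop :=
  ∃ hobj : ∀ X, G.obj X = Tr (partialApp F X), ForallAction F G hobj

/-- The uniform family of cliques obtained by instantiating a clique of the trace. -/
def instFam {n : ℕ} (F : CohTuple n ⥤ CohSpace) (c : Set (Tr F).web) :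
    ∀ X : CohTuple n, Set (F.obj X).web := fun X =>
  { x | ∃ (d : CanonNF F) (ι : canonTuple d.1 ⟶ X),
      Quotient.mk (traceSetoid F) d ∈ c ∧ (F.map ι).toFun d.2.1 = x }

/-!
Since `F` preserves filtered colimits, every point of `F(X⃗)` is the image of a point of
`F(Y⃗)` for a finite sub-tuple `Y⃗ ↪ X⃗`, and hence of a normal form below it. The degree
bounds the webs of normal forms, so up to isomorphism these live on the finitely many tuples
of coherence spaces with webs `Fin k`, `k ≤ deg F`, each of which `F` sends to a finite web.
By uniformity a family of cliques is determined by its values on these finitely many finite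
webs.
-/

lemma Monotone.exists_mem_and_mem {J α : Type*} [Preorder J] [IsDirected J (· ≤ ·)]
    {S : J → Set α} (hS : Monotone S) (hcover : ∀ x, ∃ j, x ∈ S j) (x y : α) :
    ∃ k, x ∈ S k ∧ y ∈ S k := by
  obtain ⟨⟨j, hx⟩, ⟨j', hy⟩⟩ := And.intro (hcover x) (hcover y)
  obtain ⟨k, hjk, hj'k⟩ := directed_of (· ≤ ·) j j'
  exact ⟨k, hS hjk hx, hS hj'k hy⟩

lemma monotone_setOf_sigma_mk_mem {ι : Type*} {α : ι → Type*} (i : ι) :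
    Monotone fun s : Finset (Σ i, α i) => {x | ⟨i, x⟩ ∈ s} :=
  fun _ _ h _ hx => h hx

namespace CohSpace

lemma inv_hom_apply {X Y : CohSpace} (e : X ≅ Y) (y : Y.web) : e.hom.toFun (e.inv.toFun y) = y :=
  congrArg (fun g => CohEmb.toFun g y) e.inv_hom_id

def isoOfEquiv {X Y : CohSpace} (e : X.web ≃ Y.web)
    (he : ∀ x x', X.coh x x' ↔ Y.coh (e x) (e x')) : X ≅ Y where
  hom := ⟨e, e.injective, he⟩
  inv := ⟨e.symm, e.symm.injective, fun y y' => by simpa using (he (e.symm y) (e.symm y')).symm⟩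
  hom_inv_id := CohEmb.ext (funext e.symm_apply_apply)
  inv_hom_id := CohEmb.ext (funext e.apply_symm_apply)

lemma isIso_of_bijective {X Y : CohSpace} (f : X ⟶ Y) (hf : Function.Bijective f.toFun) :
    IsIso f :=
  (isoOfEquiv (Equiv.ofBijective _ hf) f.coh_iff).isIso_hom

noncomputable def toFinCohData (X : CohSpace) [Finite X.web] : FinCohData where
  k := Nat.card X.web
  r a b := X.coh ((Finite.equivFin X.web).symm a) ((Finite.equivFin X.web).symm b)
  refl _ := X.refl _
  symm h := X.symm h

noncomputable def toFinCohDataIso (X : CohSpace) [Finite X.web] : X.toFinCohData.toCoh ≅ X :=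
  isoOfEquiv (Finite.equivFin X.web).symm fun _ _ => Iff.rfl

def restrict (X : CohSpace) (S : Set X.web) : CohSpace where
  web := S
  coh a b := X.coh a b
  refl a := X.refl a
  symm h := X.symm h

def restrictEmb (X : CohSpace) (S : Set X.web) : X.restrict S ⟶ X :=
  ⟨Subtype.val, Subtype.val_injective, fun _ _ => Iff.rfl⟩

def restrictInclusion (X : CohSpace) {S T : Set X.web} (h : S ⊆ T) :
    X.restrict S ⟶ X.restrict T :=
  ⟨Set.inclusion h, Set.inclusion_injective h, fun _ _ => Iff.rfl⟩

def codRestrict {X Y : CohSpace} (f : Y ⟶ X) (S : Set X.web) (h : ∀ y, f.toFun y ∈ S) :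
    Y ⟶ X.restrict S :=
  ⟨fun y => ⟨f.toFun y, h y⟩, fun _ _ hab => f.inj (congrArg Subtype.val hab), f.coh_iff⟩

theorem jointly_surjective {J : Type*} [Category J] {K : J ⥤ CohSpace} {c : Cocone K}
    (hc : IsColimit c) (x : c.pt.web) : ∃ j y, (c.ι.app j).toFun y = x := by
  let S : Set c.pt.web := ⋃ j, Set.range (c.ι.app j).toFun
  -- corestricting the legs to their joint image `S` makes `c.pt` factor through `S`
  let c' : Cocone K :=
    { pt := c.pt.restrict S
      ι :=
        { app := fun j => codRestrict (c.ι.app j) S fun y => Set.mem_iUnion.2 ⟨j, y, rfl⟩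
          naturality := fun j j' f => CohEmb.ext <| funext fun y => Subtype.ext <|
            congrArg (fun g => CohEmb.toFun g y) (c.w f) } }
  have hsection : hc.desc c' ≫ c.pt.restrictEmb S = 𝟙 c.pt :=
    hc.hom_ext fun j => by rw [hc.fac_assoc]; rfl
  have hx : (c.pt.restrictEmb S).toFun ((hc.desc c').toFun x) = x :=
    congrArg (fun g => CohEmb.toFun g x) hsection
  have hmem : x ∈ S := by
    rw [← hx]
    exact ((hc.desc c').toFun x).2
  obtain ⟨j, y, hy⟩ := Set.mem_iUnion.1 hmem
  exact ⟨j, y, hy⟩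

section DirectedUnion

variable {J : Type*} [Preorder J] (X : CohSpace) {S : J → Set X.web} (hS : Monotone S)

def subspaceDiagram : J ⥤ CohSpace where
  obj j := X.restrict (S j)
  map f := X.restrictInclusion (hS (leOfHom f))

def subspaceCocone : Cocone (X.subspaceDiagram hS) where
  pt := X
  ι := { app := fun j => X.restrictEmb (S j) }

variable {X hS}

lemma ι_app_apply_eq [IsDirected J (· ≤ ·)] (c : Cocone (X.subspaceDiagram hS)) {j j' : J}
    {x : X.web} (hx : x ∈ S j) (hx' : x ∈ S j') :
    (c.ι.app j).toFun ⟨x, hx⟩ = (c.ι.app j').toFun ⟨x, hx'⟩ := by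
  obtain ⟨k, hjk, hj'k⟩ := directed_of (· ≤ ·) j j'
  have to_k : ∀ {i} (hik : i ≤ k) (hxi : x ∈ S i),
      (c.ι.app k).toFun ⟨x, hS hik hxi⟩ = (c.ι.app i).toFun ⟨x, hxi⟩ :=
    fun hik hxi => congrFun (congrArg CohEmb.toFun (c.w (homOfLE hik))) ⟨x, hxi⟩
  exact (to_k hjk hx).symm.trans (to_k hj'k hx')

variable (X hS)

noncomputable def isColimitSubspaceCocone [IsDirected J (· ≤ ·)]
    (hcover : ∀ x, ∃ j, x ∈ S j) : IsColimit (X.subspaceCocone hS) where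
  desc c :=
    { toFun := fun x => (c.ι.app (hcover x).choose).toFun ⟨x, (hcover x).choose_spec⟩
      inj := fun (x y : X.web) hxy => by
        dsimp only at hxy
        obtain ⟨k, hxk, hyk⟩ := hS.exists_mem_and_mem hcover x y
        rw [ι_app_apply_eq c _ hxk, ι_app_apply_eq c _ hyk] at hxy
        exact congrArg Subtype.val ((c.ι.app k).inj hxy)
      coh_iff := fun (x y : X.web) => by
        show X.coh x y ↔ c.pt.coh _ _
        obtain ⟨k, hxk, hyk⟩ := hS.exists_mem_and_mem hcover x y
        rw [ι_app_apply_eq c _ hxk, ι_app_apply_eq c _ hyk]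
        exact (c.ι.app k).coh_iff ⟨x, hxk⟩ ⟨y, hyk⟩ }
  fac c j := CohEmb.ext <| funext fun y => ι_app_apply_eq c _ y.2
  uniq c m hm := CohEmb.ext <| funext fun x =>
    congrFun (congrArg CohEmb.toFun (hm (hcover x).choose)) ⟨x, (hcover x).choose_spec⟩

end DirectedUnion

end CohSpace

namespace CohTuple

variable {n : ℕ}

noncomputable def webCard (X : CohTuple n) : ℕ := ∑ i, Nat.card (X i).web

lemma isIso_of_webCard_le {X Y : CohTuple n} (f : X ⟶ Y) [∀ i, Finite (Y i).web]
    (h : webCard Y ≤ webCard X) : IsIso f := by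
  have hle : ∀ i ∈ Finset.univ, Nat.card (X i).web ≤ Nat.card (Y i).web :=
    fun i _ => Nat.card_le_card_of_injective _ (f i).inj
  have hcard := (Finset.sum_eq_sum_iff_of_le hle).1 (le_antisymm (Finset.sum_le_sum hle) h)
  rw [isIso_pi_iff]
  exact fun i => CohSpace.isIso_of_bijective _
    ((Nat.bijective_iff_injective_and_card _).2 ⟨(f i).inj, hcard i (Finset.mem_univ i)⟩)

-- Indexed by finite sets of points, a directed preorder: a tuple of finite sets would carry the
-- product category structure instead.
noncomputable def finSubtupleDiagram (X : CohTuple n) : Finset (Σ i, (X i).web) ⥤ CohTuple n :=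
  Functor.pi' fun i => (X i).subspaceDiagram (monotone_setOf_sigma_mk_mem i)

noncomputable def finSubtupleCocone (X : CohTuple n) : Cocone (finSubtupleDiagram X) :=
  pi.coconeOfCoconeCompEval fun i => (X i).subspaceCocone (monotone_setOf_sigma_mk_mem i)

noncomputable def isColimitFinSubtupleCocone (X : CohTuple n) :
    IsColimit (finSubtupleCocone X) :=
  pi.coconeOfCoconeEvalIsColimit fun i =>
    (X i).isColimitSubspaceCocone (monotone_setOf_sigma_mk_mem i)
      fun x => ⟨{⟨i, x⟩}, Finset.mem_singleton_self _⟩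

lemma finite_finSubtupleDiagram_obj (X : CohTuple n) (s : Finset (Σ i, (X i).web)) (i : Fin n) :
    Finite ((finSubtupleDiagram X).obj s i).web :=
  (s.finite_toSet.preimage sigma_mk_injective.injOn).to_subtype

end CohTuple

section NormalForms

variable {n : ℕ} {F : CohTuple n ⥤ CohSpace}

lemma exists_finite_hom [PreservesFilteredColimits F] (e : Elts F) :
    ∃ f : Elts F, (∀ i, Finite (f.1 i).web) ∧ Nonempty (f ⟶ e) := by
  obtain ⟨s, y, hy⟩ := CohSpace.jointly_surjective
    (isColimitOfPreserves F (CohTuple.isColimitFinSubtupleCocone e.1)) e.2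
  exact ⟨⟨_, y⟩, CohTuple.finite_finSubtupleDiagram_obj e.1 s, ⟨⟨_, hy⟩⟩⟩

lemma isNormalForm_of_forall_isIso {e : Elts F} (hfin : ∀ i, Finite (e.1 i).web)
    (h : ∀ (f : Elts F) (u : f ⟶ e), IsIso u) : IsNormalForm e := by
  refine ⟨hfin, fun f u => ?_⟩
  have := h f u
  exact ⟨inv u, IsIso.inv_hom_id u, fun v hv => by rw [← cancel_mono u, hv, IsIso.inv_hom_id]⟩

lemma exists_isNormalForm_hom_of_finite (e : Elts F) (he : ∀ i, Finite (e.1 i).web) :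
    ∃ f : Elts F, IsNormalForm f ∧ Nonempty (f ⟶ e) := by
  classical
  have hP : ∃ N, ∃ f : Elts F, (∀ i, Finite (f.1 i).web) ∧ Nonempty (f ⟶ e) ∧
      f.1.webCard = N :=
    ⟨_, e, he, ⟨𝟙 e⟩, rfl⟩
  -- an element below `e` of minimal total web size: by counting, nothing maps properly into it
  obtain ⟨f, hf, ⟨u⟩, hcard⟩ := Nat.find_spec hP
  refine ⟨f, isNormalForm_of_forall_isIso hf fun g w => ?_, ⟨u⟩⟩
  have hg : ∀ i, Finite (g.1 i).web := fun i => Finite.of_injective _ (w.1 i).inj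
  have : IsIso ((CategoryOfElements.π _).map w) :=
    CohTuple.isIso_of_webCard_le w.1 (hcard ▸ Nat.find_min' hP ⟨g, hg, ⟨w ≫ u⟩, rfl⟩)
  exact isIso_of_reflects_iso w (CategoryOfElements.π _)

lemma exists_isNormalForm_hom [PreservesFilteredColimits F] (e : Elts F) :
    ∃ f : Elts F, IsNormalForm f ∧ Nonempty (f ⟶ e) := by
  obtain ⟨f, hf, ⟨u⟩⟩ := exists_finite_hom e
  obtain ⟨g, hg, ⟨w⟩⟩ := exists_isNormalForm_hom_of_finite f hf
  exact ⟨g, hg, ⟨w ≫ u⟩⟩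

lemma IsNormalForm.card_web_le {D : ℕ} (hD : degree F ≤ D) {e : Elts F} (he : IsNormalForm e)
    (i : Fin n) : Nat.card (e.1 i).web ≤ D := by
  have h : (Nat.card (e.1 i).web : ℕ∞) ≤ degree F :=
    le_iSup_of_le e (le_iSup_of_le he (le_iSup_of_le i le_rfl))
  exact_mod_cast h.trans hD

lemma exists_canonTuple_hom [PreservesFilteredColimits F] {D : ℕ} (hD : degree F ≤ D)
    (e : Elts F) : ∃ d : Fin n → FinCohData, (∀ i, (d i).k ≤ D) ∧
      ∃ z : (F.obj (canonTuple d)).web,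
        Nonempty ((F ⋙ webF).elementsMk (canonTuple d) z ⟶ e) := by
  obtain ⟨f, hf, ⟨u⟩⟩ := exists_isNormalForm_hom e
  have := hf.1
  let φ : canonTuple (fun i => (f.1 i).toFinCohData) ≅ f.1 :=
    Pi.isoMk fun i => (f.1 i).toFinCohDataIso
  exact ⟨_, hf.card_web_le hD, _,
    ⟨⟨φ.hom, CohSpace.inv_hom_apply (F.mapIso φ) f.2⟩ ≫ u⟩⟩

end NormalForms

namespace IsUniformFamily

variable {n : ℕ} {F : CohTuple n ⥤ CohSpace} {c c' : ∀ X : CohTuple n, Set (F.obj X).web}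

lemma mem_iff_of_hom (hc : IsUniformFamily F c) {e f : Elts F} (u : f ⟶ e) :
    e.2 ∈ c e.1 ↔ f.2 ∈ c f.1 := by
  rw [hc.2 f.1 e.1 u.1]
  exact Iff.of_eq (congrArg (· ∈ c e.1) u.2.symm)

lemma ext_of_canonTuple [PreservesFilteredColimits F] {D : ℕ} (hD : degree F ≤ D)
    (hc : IsUniformFamily F c) (hc' : IsUniformFamily F c')
    (h : ∀ d : Fin n → FinCohData, (∀ i, (d i).k ≤ D) →
      c (canonTuple d) = c' (canonTuple d)) :
    c = c' := by
  funext X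
  ext x
  obtain ⟨d, hd, z, ⟨u⟩⟩ := exists_canonTuple_hom hD ((F ⋙ webF).elementsMk X x)
  calc x ∈ c X ↔ z ∈ c (canonTuple d) := hc.mem_iff_of_hom u
    _ ↔ z ∈ c' (canonTuple d) := by rw [h d hd]
    _ ↔ x ∈ c' X := (hc'.mem_iff_of_hom u).symm

end IsUniformFamily

attribute [ext] FinCohData

lemma FinCohData.finite_of_k_le (D : ℕ) : Finite { d : FinCohData // d.k ≤ D } :=
  Finite.of_injective
    (fun d => (⟨⟨d.1.k, Nat.lt_succ_of_le d.2⟩, d.1.r⟩ :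
      Σ k : Fin (D + 1), (Fin k → Fin k → Prop)))
    fun _ _ h => Subtype.ext (FinCohData.ext (congrArg (·.1.val) h) (Sigma.mk.inj_iff.1 h).2)

theorem stmt9 {n : ℕ} (F : CohTuple n ⥤ CohSpace) (hF : IsNormalFunctor F)
    (hfin : IsFiniteFunctor F) :
    { c : ∀ X : CohTuple n, Set (F.obj X).web | IsUniformFamily F c }.Finite := by
  have := hF.1
  obtain ⟨hweb, hdeg⟩ := hfin
  obtain ⟨D, hD⟩ := WithTop.ne_top_iff_exists.1 hdeg.ne
  have := FinCohData.finite_of_k_le D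
  have (d : Fin n → { d : FinCohData // d.k ≤ D }) :
      Finite (F.obj (canonTuple fun i => (d i).1)).web :=
    hweb _ fun i => inferInstanceAs (Finite (Fin _))
  refine Set.finite_coe_iff.1 <| Finite.of_injective
    (fun c (d : Fin n → { d : FinCohData // d.k ≤ D }) => c.1 (canonTuple fun i => (d i).1))
    fun c c' h => Subtype.ext ?_
  exact c.2.ext_of_canonTuple hD.ge c'.2 fun d hd => congrFun h fun i => ⟨d i, hd i⟩
end

section
/- For any normal functor F : CohI^{n+1} → CohI, deg(∀(F)) ≤ deg(F). -/
open CategoryTheory Limits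

/-!
A normal form `(X⃗, q)` of `∀(F)` is represented by a self-coherent normal form `(Z, x)` of
`F(X⃗, −)`, and `((X⃗, Z), x)` is then a normal form of `F` whose first `n` webs are those of `X⃗`.

To see this, note that an element of `El(|H|)` with finite webs is a normal form exactly when every
morphism into it is componentwise surjective (hence invertible). A morphism
`u : (W⃗, w) ⟶ ((X⃗, Z), x)` splits into a front part `ι : W⃗' ⟶ X⃗` and a last part `ζ : W' ⟶ Z`.
The last part is surjective because `(Z, x)` is a normal form of `F(X⃗, −)`. For the front part,
`w` yields a point of `F(W⃗', Z)` sent to `x` by the embedding `F(ι, Z)`, which reflects normality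
and coherence; so it is a point of `∀(F)(W⃗')` mapped to `q` by `∀(F)(ι)`, and normality of
`(X⃗, q)` makes `ι` surjective.
-/

open Function

theorem CohEmb.isIso_of_surjective {X Y : CohSpace} (f : X ⟶ Y) (hf : Surjective f.toFun) :
    IsIso f := by
  let e := Equiv.ofBijective f.toFun ⟨f.inj, hf⟩
  let g : Y ⟶ X :=
    { toFun := e.symm
      inj := e.symm.injective
      coh_iff := fun y y' => by
        rw [f.coh_iff, show f.toFun (e.symm y) = y from e.apply_symm_apply y,
          show f.toFun (e.symm y') = y' from e.apply_symm_apply y'] }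
  exact ⟨g, CohEmb.ext (funext e.symm_apply_apply), CohEmb.ext (funext e.apply_symm_apply)⟩

section NormalForm

variable {m : ℕ} {H : CohTuple m ⥤ CohSpace}

theorem isNormalForm_iff_surjective {e : Elts H} :
    IsNormalForm e ↔ (∀ i, Finite (e.1 i).web) ∧
      ∀ (f : Elts H) (u : f ⟶ e) (j : Fin m), Surjective (u.1 j).toFun := by
  refine and_congr_right fun _ => forall₂_congr fun f u => ⟨fun h j z => ?_, fun h => ?_⟩
  · obtain ⟨v, hv, -⟩ := h
    exact ⟨(v.1 j).toFun z, congrArg (fun w : e ⟶ e => (w.1 j).toFun z) hv⟩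
  · have : IsIso ((CategoryOfElements.π _).map u) :=
      (isIso_pi_iff _).2 fun j => CohEmb.isIso_of_surjective _ (h j)
    have : IsIso u := isIso_of_reflects_iso u (CategoryOfElements.π _)
    exact ⟨inv u, IsIso.inv_hom_id u,
      fun v hv => (cancel_mono u).1 (hv.trans (IsIso.inv_hom_id u).symm)⟩

theorem IsNormalForm.surjective {e f : Elts H} (he : IsNormalForm e) (u : f ⟶ e) (j : Fin m) :
    Surjective (u.1 j).toFun :=
  (isNormalForm_iff_surjective.1 he).2 f u j

variable {K : CohTuple m ⥤ CohSpace} (α : H ⟶ K)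

theorem IsNormalForm.of_natTrans {X : CohTuple m} {x : (H.obj X).web}
    (h : IsNormalForm (F := K) ⟨X, (α.app X).toFun x⟩) : IsNormalForm (F := H) ⟨X, x⟩ :=
  isNormalForm_iff_surjective.2 ⟨h.1, fun _ u =>
    h.surjective ((CategoryOfElements.map (Functor.whiskerRight α webF)).map u)⟩

theorem NFCoherent.of_natTrans {X Y : CohTuple m} {x : (H.obj X).web} {y : (H.obj Y).web}
    (h : NFCoherent (F := K) ⟨X, (α.app X).toFun x⟩ ⟨Y, (α.app Y).toFun y⟩) :
    NFCoherent (F := H) ⟨X, x⟩ ⟨Y, y⟩ := fun Z ι κ => by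
  have hnat : ∀ {W : CohTuple m} (θ : W ⟶ Z) (w : (H.obj W).web),
      (α.app Z).toFun ((H.map θ).toFun w) = (K.map θ).toFun ((α.app W).toFun w) :=
    fun θ w => congrArg (fun t => CohEmb.toFun t w) (α.naturality θ)
  rw [(α.app Z).coh_iff, hnat, hnat]
  exact h Z ι κ

end NormalForm

section Extension

variable {n : ℕ}

abbrev extTuple (X : CohTuple n) (Z : CohTuple 1) : CohTuple (n + 1) :=
  (Functor.pi' (gfam X)).obj Z

abbrev frontTuple (Y : CohTuple (n + 1)) : CohTuple n := fun i => Y i.castSucc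

abbrev lastTuple (Y : CohTuple (n + 1)) : CohTuple 1 := fun _ => Y (Fin.last n)

theorem gfam_castSucc (X : CohTuple n) (i : Fin n) :
    gfam X i.castSucc = (Functor.const (CohTuple 1)).obj (X i) :=
  dif_pos (by simp)

theorem gfam_last (X : CohTuple n) :
    gfam X (Fin.last n) = Pi.eval (fun _ : Fin 1 => CohSpace) 0 :=
  dif_neg (by simp)

theorem extTuple_castSucc (X : CohTuple n) (Z : CohTuple 1) (i : Fin n) :
    extTuple X Z i.castSucc = X i := by
  simp [gfam_castSucc]

theorem extTuple_last (X : CohTuple n) (Z : CohTuple 1) : extTuple X Z (Fin.last n) = Z 0 := by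
  simp [gfam_last]

variable {X Y : CohTuple n} {Z Z' : CohTuple 1}

theorem pi'_map_castSucc (ζ : Z ⟶ Z') (i : Fin n) :
    (Functor.pi' (gfam X)).map ζ i.castSucc =
      eqToHom ((extTuple_castSucc X Z i).trans (extTuple_castSucc X Z' i).symm) := by
  simp only [Functor.pi'_map, Functor.congr_hom (gfam_castSucc X i) ζ, Functor.const_obj_obj,
    Functor.const_obj_map, Category.id_comp, eqToHom_trans]
  rfl

theorem pi'_map_last (ζ : Z ⟶ Z') :
    (Functor.pi' (gfam X)).map ζ (Fin.last n) =
      eqToHom (extTuple_last X Z) ≫ ζ 0 ≫ eqToHom (extTuple_last X Z').symm := by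
  simp only [Functor.pi'_map, Functor.congr_hom (gfam_last X) ζ, Pi.eval_map]
  rfl

theorem extHomPi_castSucc (ι : X ⟶ Y) (Z : CohTuple 1) (i : Fin n) :
    extHomPi ι Z i.castSucc =
      eqToHom (extTuple_castSucc X Z i) ≫ ι i ≫ eqToHom (extTuple_castSucc Y Z i).symm := by
  refine (conj_eqToHom_iff_heq _ _ (extTuple_castSucc X Z i) (extTuple_castSucc Y Z i)).2 ?_
  rw [extHomPi, extHom, dif_pos (by simp), eq_mpr_eq_cast]
  exact cast_heq _ _

theorem extHomPi_last (ι : X ⟶ Y) (Z : CohTuple 1) :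
    extHomPi ι Z (Fin.last n) =
      eqToHom ((extTuple_last X Z).trans (extTuple_last Y Z).symm) := by
  have h : extHomPi ι Z (Fin.last n) =
      eqToHom (extTuple_last X Z) ≫ 𝟙 (Z 0) ≫ eqToHom (extTuple_last Y Z).symm := by
    refine (conj_eqToHom_iff_heq _ _ (extTuple_last X Z) (extTuple_last Y Z)).2 ?_
    rw [extHomPi, extHom, dif_neg (by simp), eq_mpr_eq_cast]
    exact cast_heq _ _
  simpa using h

theorem extHomPi_naturality (ι : X ⟶ Y) (ζ : Z ⟶ Z') :
    (Functor.pi' (gfam X)).map ζ ≫ extHomPi ι Z' = extHomPi ι Z ≫ (Functor.pi' (gfam Y)).map ζ := by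
  funext j
  rw [Pi.comp_apply, Pi.comp_apply]
  induction j using Fin.lastCases with
  | last => rw [pi'_map_last, pi'_map_last, extHomPi_last, extHomPi_last]; simp
  | cast i => rw [pi'_map_castSucc, pi'_map_castSucc, extHomPi_castSucc, extHomPi_castSucc]; simp

def extNatTrans (ι : X ⟶ Y) : Functor.pi' (gfam X) ⟶ Functor.pi' (gfam Y) where
  app := extHomPi ι
  naturality _ _ ζ := extHomPi_naturality ι ζ

theorem extTuple_front_last (W : CohTuple (n + 1)) :
    extTuple (frontTuple W) (lastTuple W) = W := by
  funext j
  induction j using Fin.lastCases with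
  | last => exact extTuple_last _ _
  | cast i => exact extTuple_castSucc _ _ i

variable {W : CohTuple (n + 1)}

def frontMor (u : W ⟶ extTuple X Z) : frontTuple W ⟶ X := fun i =>
  u i.castSucc ≫ eqToHom (extTuple_castSucc X Z i)

def lastMor (u : W ⟶ extTuple X Z) : lastTuple W ⟶ Z := fun k =>
  u (Fin.last n) ≫ eqToHom ((extTuple_last X Z).trans (congrArg Z (Subsingleton.elim 0 k)))

theorem frontMor_lastMor_factorization (u : W ⟶ extTuple X Z) :
    eqToHom (extTuple_front_last W).symm ≫ extHomPi (frontMor u) (lastTuple W) ≫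
      (Functor.pi' (gfam X)).map (lastMor u) = u := by
  funext j
  rw [Pi.comp_apply, Pi.comp_apply, Functor.eqToHom_proj]
  induction j using Fin.lastCases with
  | last => rw [pi'_map_last, extHomPi_last]; simp [lastMor]
  | cast i => rw [pi'_map_castSucc, extHomPi_castSucc]; simp [frontMor]

end Extension

theorem CohEmb.surjective_of_comp_eqToHom {A B C : CohSpace} (f : A ⟶ B) (h : B = C)
    (hs : Surjective (f ≫ eqToHom h).toFun) : Surjective f.toFun := by
  subst h
  simpa using hs

theorem CanonNF.ext {m : ℕ} {H : CohTuple m ⥤ CohSpace} {c c' : CanonNF H} (hd : c.1 = c'.1)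
    (hx : HEq c.2.1 c'.2.1) : c = c' := by
  obtain ⟨d, x, _⟩ := c
  obtain ⟨d', x', _⟩ := c'
  subst hd
  cases eq_of_heq hx
  rfl

theorem degree_le_of_forall_isNormalForm {m k : ℕ} {H : CohTuple m ⥤ CohSpace}
    {K : CohTuple k ⥤ CohSpace} (σ : Fin m → Fin k)
    (h : ∀ e : Elts H, IsNormalForm e →
      ∃ e' : Elts K, IsNormalForm e' ∧ ∀ i, Nat.card (e.1 i).web ≤ Nat.card (e'.1 (σ i)).web) :
    degree H ≤ degree K := by
  refine iSup₂_le fun e he => iSup_le fun i => ?_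
  obtain ⟨e', he', hcard⟩ := h e he
  exact (Nat.cast_le.2 (hcard i)).trans (le_iSup₂_of_le e' he' (le_iSup_of_le (σ i) le_rfl))

section Forall

variable {n : ℕ} {F : CohTuple (n + 1) ⥤ CohSpace} {G : CohTuple n ⥤ CohSpace}

theorem trWebCast_mk_surjective (hobj : ∀ X, G.obj X = Tr (partialApp F X)) (X : CohTuple n) :
    Surjective fun c : CanonNF (partialApp F X) => trWebCast hobj X ⟦c⟧ :=
  (cast_bijective _).surjective.comp Quotient.mk_surjective

theorem isNormalForm_extTuple {hobj : ∀ X, G.obj X = Tr (partialApp F X)}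
    (hact : ForallAction F G hobj) {X : CohTuple n} (c : CanonNF (partialApp F X))
    (hq : IsNormalForm (F := G) ⟨X, trWebCast hobj X ⟦c⟧⟩) :
    IsNormalForm (F := F) ⟨extTuple X (canonTuple c.1), c.2.1⟩ := by
  obtain ⟨d, x, hxnf, hxcoh⟩ := c
  change IsNormalForm (F := F) ⟨extTuple X (canonTuple d), x⟩
  refine isNormalForm_iff_surjective.2 ⟨fun j => ?_, fun ⟨W, w⟩ u => ?_⟩
  · change Finite (extTuple X (canonTuple d) j).web
    induction j using Fin.lastCases with
    | last => rw [extTuple_last]; exact Finite.of_fintype (Fin (d 0).k)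
    | cast i => rw [extTuple_castSucc]; exact hq.1 i
  let w₀ := (F.map (eqToHom (extTuple_front_last W).symm)).toFun w
  have hw₀ : (F.map (extHomPi (frontMor u.1) (lastTuple W) ≫
      (Functor.pi' (gfam X)).map (lastMor u.1))).toFun w₀ = x := by
    have hu : (F.map u.1).toFun w = x := u.2
    rw [← frontMor_lastMor_factorization u.1, F.map_comp] at hu
    exact hu
  have hlast : ∀ k, Surjective (lastMor u.1 k).toFun := by
    rw [F.map_comp] at hw₀
    let v : (partialApp F X ⋙ webF).elementsMk (lastTuple W)
        ((F.map (extHomPi (frontMor u.1) _)).toFun w₀) ⟶ ⟨canonTuple d, x⟩ := ⟨lastMor u.1, hw₀⟩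
    exact hxnf.surjective v
  have hfront : ∀ i, Surjective (frontMor u.1 i).toFun := by
    let α := Functor.whiskerRight (extNatTrans (frontMor u.1)) F
    let w₁ : ((partialApp F (frontTuple W)).obj (canonTuple d)).web :=
      (F.map ((Functor.pi' (gfam (frontTuple W))).map (lastMor u.1))).toFun w₀
    have hw₁ : (α.app (canonTuple d)).toFun w₁ = x := by
      rw [← extHomPi_naturality, F.map_comp] at hw₀
      exact hw₀
    have hnf : IsNormalForm (F := partialApp F (frontTuple W)) ⟨canonTuple d, w₁⟩ :=
      IsNormalForm.of_natTrans α (by rw [hw₁]; exact hxnf)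
    have hcoh : NFCoherent (F := partialApp F (frontTuple W))
        ⟨canonTuple d, w₁⟩ ⟨canonTuple d, w₁⟩ :=
      NFCoherent.of_natTrans α (by rw [hw₁]; exact hxcoh)
    obtain ⟨c', hc'G, hc'd, hc'x⟩ := hact (frontTuple W) X (frontMor u.1) ⟨d, w₁, hnf, hcoh⟩
    rw [CanonNF.ext (c' := ⟨d, x, hxnf, hxcoh⟩) hc'd (hc'x.trans (heq_of_eq hw₁))] at hc'G
    exact hq.surjective (f := (G ⋙ webF).elementsMk _ _) ⟨frontMor u.1, hc'G⟩
  intro j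
  induction j using Fin.lastCases with
  | last => exact CohEmb.surjective_of_comp_eqToHom _ _ (hlast 0)
  | cast i => exact CohEmb.surjective_of_comp_eqToHom _ _ (hfront i)

end Forall

theorem stmt11_general {n : ℕ} (F : CohTuple (n + 1) ⥤ CohSpace)
    (G : CohTuple n ⥤ CohSpace)
    (hobj : ∀ X, G.obj X = Tr (partialApp F X)) (hact : ForallAction F G hobj) :
    degree G ≤ degree F := by
  refine degree_le_of_forall_isNormalForm Fin.castSucc fun ⟨X, q⟩ hq => ?_
  obtain ⟨c, rfl⟩ := trWebCast_mk_surjective hobj X q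
  exact ⟨_, isNormalForm_extTuple hact c hq, fun i =>
    (congrArg (Nat.card ∘ CohSpace.web) (extTuple_castSucc X _ i)).ge⟩

theorem stmt11 {n : ℕ} (F : CohTuple (n + 1) ⥤ CohSpace) (hF : IsNormalFunctor F)
    (G : CohTuple n ⥤ CohSpace) (hG : IsNormalFunctor G)
    (hobj : ∀ X, G.obj X = Tr (partialApp F X)) (hact : ForallAction F G hobj) :
    degree G ≤ degree F :=
  stmt11_general F G hobj hact
end

section
/- Let F, G : CohI^n → CohI be normal functors. Then: (i) NF(F ⊕ G) is in bijection with the disjoint union NF(F) ⊎ NF(G), a normal form ⟨X⃗⟩x of F corresponding to the normal form ⟨X⃗⟩inl(x) of F ⊕ G, and a normal form ⟨Y⃗⟩y of G to ⟨Y⃗⟩inr(y); (ii) if ⟨X⃗⟩x ∈ NF(F) and ⟨Y⃗⟩y ∈ NF(G), then ⟨X₁ ⊕ Y₁, …, Xₙ ⊕ Yₙ⟩(F(κ⃗)(x), G(λ⃗)(y)) ∈ NF(F ⊗ G), where κ_i : X_i ↪ X_i ⊕ Y_i and λ_i : Y_i ↪ X_i ⊕ Y_i are the canonical embeddings. -/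
open CategoryTheory Limits

/-- The left injection `X ↪ X ⊕ Y` as an embedding. -/
def sumInl (X Y : CohSpace) : X ⟶ X.sum Y where
  toFun := Sum.inl
  inj := Sum.inl_injective
  coh_iff x x' := ⟨Sum.LiftRel.inl, by intro h; cases h; assumption⟩

/-- The right injection `Y ↪ X ⊕ Y` as an embedding. -/
def sumInr (X Y : CohSpace) : Y ⟶ X.sum Y where
  toFun := Sum.inr
  inj := Sum.inr_injective
  coh_iff x x' := ⟨Sum.LiftRel.inr, by intro h; cases h; assumption⟩

/-- `⟨X⃗⟩x ↦ ⟨X⃗⟩inl(x)`, as a map `El(|F|) → El(|F ⊕ G|)`. -/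
def eltsInl {n : ℕ} {F G : CohTuple n ⥤ CohSpace} (e : Elts F) : Elts (sumF F G) :=
  ⟨e.1, Sum.inl e.2⟩

/-- `⟨Y⃗⟩y ↦ ⟨Y⃗⟩inr(y)`, as a map `El(|G|) → El(|F ⊕ G|)`. -/
def eltsInr {n : ℕ} {F G : CohTuple n ⥤ CohSpace} (e : Elts G) : Elts (sumF F G) :=
  ⟨e.1, Sum.inr e.2⟩

/-!
Embeddings are monomorphisms, so a point `x ∈ F(X⃗)` with finite webs is a normal form exactly
when every embedding `u : Y⃗ ↪ X⃗` with `x` in the image of `F(u)` is split (the uniqueness of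
the section is automatic). Because `F` preserves pullbacks, a normal form `⟨X⃗⟩x` then lifts
along every embedding `u : Z⃗ ↪ W⃗` whose image under `F` contains an instantiation `F(κ)(x)`:
pull `u` back along `κ` and split the projection to `X⃗`.

For `F ⊕ G` nothing changes, since an embedding can only hit `inl(x)` from a point `inl(y)`.
For `F ⊗ G`, an embedding `u` into `X⃗ ⊕ Y⃗` hitting `(F(κ⃗)(x), G(λ⃗)(y))` receives lifts of
`κ⃗` and of `λ⃗`, and their copairing is a section of `u`.
-/

theorem CategoryTheory.Functor.map_comp_toFun {C : Type*} [Category C] (F : C ⥤ CohSpace)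
    {X Y Z : C} (f : X ⟶ Y) (g : Y ⟶ Z) (x : (F.obj X).web) :
    (F.map (f ≫ g)).toFun x = (F.map g).toFun ((F.map f).toFun x) := by
  rw [F.map_comp]; rfl

namespace CohEmb

instance {X Y : CohSpace} (f : X ⟶ Y) : Mono f :=
  ⟨fun _ _ h => CohEmb.ext (funext fun x => f.inj (congrFun (congrArg CohEmb.toFun h) x))⟩

def ofLeftInverse {X Y : CohSpace} (u : Y ⟶ X) (g : X.web → Y.web)
    (hg : Function.LeftInverse u.toFun g) : X ⟶ Y where
  toFun := g
  inj := hg.injective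
  coh_iff x x' := by rw [u.coh_iff, hg x, hg x']

theorem ofLeftInverse_comp {X Y : CohSpace} (u : Y ⟶ X) (g : X.web → Y.web)
    (hg : Function.LeftInverse u.toFun g) : ofLeftInverse u g hg ≫ u = 𝟙 X :=
  CohEmb.ext (funext hg)

variable {X Z W : CohSpace} (u : Z ⟶ W) (κ : X ⟶ W)

def pullbackObj : CohSpace where
  web := { p : Z.web × X.web // u.toFun p.1 = κ.toFun p.2 }
  coh p q := Z.coh p.1.1 q.1.1
  refl _ := Z.refl _
  symm h := Z.symm h

def pullbackFst : pullbackObj u κ ⟶ Z where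
  toFun p := p.1.1
  inj p q h := Subtype.ext (Prod.ext h (κ.inj (p.2.symm.trans ((congrArg u.toFun h).trans q.2))))
  coh_iff _ _ := Iff.rfl

def pullbackSnd : pullbackObj u κ ⟶ X where
  toFun p := p.1.2
  inj p q h := Subtype.ext (Prod.ext (u.inj (p.2.trans ((congrArg κ.toFun h).trans q.2.symm))) h)
  coh_iff p q := by
    change Z.coh p.1.1 q.1.1 ↔ _
    rw [u.coh_iff, p.2, q.2, ← κ.coh_iff]

theorem pullback_condition : pullbackFst u κ ≫ u = pullbackSnd u κ ≫ κ :=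
  CohEmb.ext (funext fun p => p.2)

end CohEmb

namespace CohTuple

variable {n : ℕ} {X Z W : CohTuple n} (u : Z ⟶ W) (κ : X ⟶ W)

def pullback : CohTuple n := fun i => CohEmb.pullbackObj (u i) (κ i)

def pullbackFst : pullback u κ ⟶ Z := fun i => CohEmb.pullbackFst (u i) (κ i)

def pullbackSnd : pullback u κ ⟶ X := fun i => CohEmb.pullbackSnd (u i) (κ i)

theorem pullback_condition : pullbackFst u κ ≫ u = pullbackSnd u κ ≫ κ :=
  funext fun i => CohEmb.pullback_condition (u i) (κ i)

def pullbackIsLimit :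
    IsLimit (PullbackCone.mk (pullbackFst u κ) (pullbackSnd u κ) (pullback_condition u κ)) :=
  PullbackCone.IsLimit.mk (pullback_condition u κ)
    (fun s i =>
      { toFun v := ⟨((s.fst i).toFun v, (s.snd i).toFun v),
          congrFun (congrArg CohEmb.toFun (congrFun s.condition i)) v⟩
        inj := fun _ _ h => (s.fst i).inj (congrArg (fun p => p.1.1) h)
        coh_iff := (s.fst i).coh_iff })
    (fun _ => rfl) (fun _ => rfl)
    (fun _ _ h₁ h₂ => funext fun i => CohEmb.ext (funext fun v => Subtype.ext (Prod.ext
      (congrFun (congrArg CohEmb.toFun (congrFun h₁ i)) v)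
      (congrFun (congrArg CohEmb.toFun (congrFun h₂ i)) v))))

instance (u : X ⟶ W) : Mono u :=
  ⟨fun _ _ h => funext fun i => (cancel_mono (u i)).1 (congrFun h i)⟩

end CohTuple

section NormalForms

variable {n : ℕ}

theorem exists_map_pullback_eq {F : CohTuple n ⥤ CohSpace}
    [PreservesLimitsOfShape WalkingCospan F] {X Z W : CohTuple n} (u : Z ⟶ W) (κ : X ⟶ W) {z : (F.obj Z).web} {x : (F.obj X).web}
    (h : (F.map u).toFun z = (F.map κ).toFun x) :
    ∃ p : (F.obj (CohTuple.pullback u κ)).web,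
      (F.map (CohTuple.pullbackFst u κ)).toFun p = z ∧
        (F.map (CohTuple.pullbackSnd u κ)).toFun p = x := by
  have hlim := isLimitPullbackConeMapOfIsLimit F _ (CohTuple.pullbackIsLimit u κ)
  have hcond := CohEmb.pullback_condition (F.map u) (F.map κ)
  refine ⟨(PullbackCone.IsLimit.lift hlim _ _ hcond).toFun ⟨(z, x), h⟩, ?_, ?_⟩
  · exact congrFun (congrArg CohEmb.toFun (PullbackCone.IsLimit.lift_fst hlim _ _ hcond)) _
  · exact congrFun (congrArg CohEmb.toFun (PullbackCone.IsLimit.lift_snd hlim _ _ hcond)) _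

theorem isNormalForm_iff {F : CohTuple n ⥤ CohSpace} (e : Elts F) :
    IsNormalForm e ↔ (∀ i, Finite (e.1 i).web) ∧
      ∀ ⦃Y : CohTuple n⦄ (u : Y ⟶ e.1) (y : (F.obj Y).web),
        (F.map u).toFun y = e.2 → IsSplitEpi u := by
  refine and_congr Iff.rfl ⟨fun h Y u y hy => ?_, fun h ⟨Y, y⟩ u => ?_⟩
  · obtain ⟨v, hv, -⟩ := h ⟨Y, y⟩ ⟨u, hy⟩
    exact IsSplitEpi.mk' ⟨v.1, congrArg Subtype.val hv⟩
  · have := h u.1 y u.2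
    have hs : (F.map (section_ u.1)).toFun e.2 = y := (F.map u.1).inj <| by
      have := F.map_comp_toFun (section_ u.1) u.1 e.2
      rw [IsSplitEpi.id, F.map_id] at this
      exact this.symm.trans u.2.symm
    refine ⟨⟨section_ u.1, hs⟩, Subtype.ext (IsSplitEpi.id u.1), fun w hw => Subtype.ext ?_⟩
    exact (cancel_mono u.1).1 ((congrArg Subtype.val hw).trans (IsSplitEpi.id u.1).symm)

theorem IsNormalForm.exists_lift {F : CohTuple n ⥤ CohSpace}
    [PreservesLimitsOfShape WalkingCospan F] {e : Elts F} (he : IsNormalForm e)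
    {Z W : CohTuple n} (u : Z ⟶ W) (κ : e.1 ⟶ W) {z : (F.obj Z).web}
    (hz : (F.map u).toFun z = (F.map κ).toFun e.2) : ∃ a : e.1 ⟶ Z, a ≫ u = κ := by
  obtain ⟨p, -, hp⟩ := exists_map_pullback_eq u κ hz
  have := ((isNormalForm_iff e).1 he).2 (CohTuple.pullbackSnd u κ) p hp
  refine ⟨section_ (CohTuple.pullbackSnd u κ) ≫ CohTuple.pullbackFst u κ, ?_⟩
  rw [Category.assoc, CohTuple.pullback_condition, ← Category.assoc, IsSplitEpi.id,
    Category.id_comp]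

variable {F G : CohTuple n ⥤ CohSpace}

theorem isNormalForm_eltsInl_iff (e : Elts F) :
    IsNormalForm (eltsInl (G := G) e) ↔ IsNormalForm e := by
  simp only [isNormalForm_iff]
  refine and_congr Iff.rfl ⟨fun h Y u y hy => h u (Sum.inl y) (congrArg Sum.inl hy),
    fun h Y u y hy => ?_⟩
  cases y with
  | inl y => exact h u y (Sum.inl.inj hy)
  | inr y => exact absurd hy Sum.inr_ne_inl

theorem isNormalForm_eltsInr_iff (e : Elts G) :
    IsNormalForm (eltsInr (F := F) e) ↔ IsNormalForm e := by
  simp only [isNormalForm_iff]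
  refine and_congr Iff.rfl ⟨fun h Y u y hy => h u (Sum.inr y) (congrArg Sum.inr hy),
    fun h Y u y hy => ?_⟩
  cases y with
  | inl y => exact absurd hy Sum.inl_ne_inr
  | inr y => exact h u y (Sum.inr.inj hy)

theorem eltsInl_injective : Function.Injective (eltsInl (F := F) (G := G)) := by
  rintro ⟨X, x⟩ ⟨Y, y⟩ ⟨⟩
  rfl

theorem eltsInr_injective : Function.Injective (eltsInr (F := F) (G := G)) := by
  rintro ⟨X, x⟩ ⟨Y, y⟩ ⟨⟩
  rfl

theorem eltsInl_ne_eltsInr (e : Elts F) (f : Elts G) : eltsInl e ≠ eltsInr f := by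
  obtain ⟨X, x⟩ := e
  obtain ⟨Y, y⟩ := f
  rintro ⟨⟩

theorem setOf_isNormalForm_sumF :
    { e : Elts (sumF F G) | IsNormalForm e } =
      eltsInl '' { e : Elts F | IsNormalForm e } ∪ eltsInr '' { e : Elts G | IsNormalForm e } := by
  refine subset_antisymm ?_ (Set.union_subset ?_ ?_)
  · rintro ⟨Z, z | z⟩ h
    · exact Or.inl ⟨⟨Z, z⟩, (isNormalForm_eltsInl_iff _).1 h, rfl⟩
    · exact Or.inr ⟨⟨Z, z⟩, (isNormalForm_eltsInr_iff _).1 h, rfl⟩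
  · exact Set.image_subset_iff.2 fun e => (isNormalForm_eltsInl_iff e).2
  · exact Set.image_subset_iff.2 fun e => (isNormalForm_eltsInr_iff e).2

theorem isNormalForm_tensF [PreservesLimitsOfShape WalkingCospan F]
    [PreservesLimitsOfShape WalkingCospan G] {e : Elts F} {f : Elts G}
    (he : IsNormalForm e) (hf : IsNormalForm f) :
    IsNormalForm (F := tensF F G)
      ⟨fun i => (e.1 i).sum (f.1 i),
        ((F.map fun i => sumInl (e.1 i) (f.1 i)).toFun e.2,
          (G.map fun i => sumInr (e.1 i) (f.1 i)).toFun f.2)⟩ := by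
  refine (isNormalForm_iff _).2 ⟨fun i => ?_, fun Y u y hy => ?_⟩
  · have := he.1 i
    have := hf.1 i
    exact inferInstanceAs (Finite ((e.1 i).web ⊕ (f.1 i).web))
  obtain ⟨a, ha⟩ := he.exists_lift u _ (congrArg Prod.fst hy)
  obtain ⟨b, hb⟩ := hf.exists_lift u _ (congrArg Prod.snd hy)
  have hab : ∀ i, Function.LeftInverse (u i).toFun (Sum.elim (a i).toFun (b i).toFun) := by
    intro i s
    cases s with
    | inl x => exact congrFun (congrArg CohEmb.toFun (congrFun ha i)) x
    | inr x => exact congrFun (congrArg CohEmb.toFun (congrFun hb i)) x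
  exact IsSplitEpi.mk' ⟨fun i => CohEmb.ofLeftInverse (u i) _ (hab i),
    funext fun i => CohEmb.ofLeftInverse_comp (u i) _ (hab i)⟩

end NormalForms

theorem stmt15 {n : ℕ} (F G : CohTuple n ⥤ CohSpace)
    (hF : IsNormalFunctor F) (hG : IsNormalFunctor G) :
    ({ e : Elts (sumF F G) | IsNormalForm e }
        = eltsInl '' { e : Elts F | IsNormalForm e } ∪
            eltsInr '' { e : Elts G | IsNormalForm e } ∧
      Function.Injective (eltsInl (F := F) (G := G)) ∧
      Function.Injective (eltsInr (F := F) (G := G)) ∧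
      Disjoint (eltsInl '' { e : Elts F | IsNormalForm e })
        (eltsInr '' { e : Elts G | IsNormalForm e })) ∧
    (∀ (e : Elts F) (f : Elts G), IsNormalForm e → IsNormalForm f →
      IsNormalForm (F := tensF F G)
        ⟨fun i => (e.1 i).sum (f.1 i),
          ((F.map fun i => sumInl (e.1 i) (f.1 i)).toFun e.2,
            (G.map fun i => sumInr (e.1 i) (f.1 i)).toFun f.2)⟩) := by
  have := hF.2
  have := hG.2
  refine ⟨⟨setOf_isNormalForm_sumF, eltsInl_injective, eltsInr_injective, ?_⟩,
    fun e f => isNormalForm_tensF⟩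
  rw [Set.disjoint_left]
  rintro _ ⟨e, -, rfl⟩ ⟨f, -, hf⟩
  exact eltsInl_ne_eltsInr e f hf.symm
end

section
/- Define A * B := (A & 1) ⊗ (B & 1) on coherence spaces. Then * is not associative, even up to isomorphism of coherence spaces: for A = B = 1 (the one-point coherence space) and C = ⊤ (the empty coherence space), the web of (A * B) * C has cardinality 5 while the web of A * (B * C) has cardinality 6. -/
open CategoryTheory Limits

/-- Isomorphism of coherence spaces: a bijection of webs preserving and reflecting
coherence. -/
def CohIso (A B : CohSpace) : Prop :=
  ∃ e : A.web ≃ B.web, ∀ a a', A.coh a a' ↔ B.coh (e a) (e a')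

/-- The candidate affine tensor product `A * B := (A & 1) ⊗ (B & 1)`. -/
def starCoh (A B : CohSpace) : CohSpace := (A.withc oneCoh).tens (B.withc oneCoh)

open Cardinal

namespace CohSpace

@[simp]
lemma mk_web_dual (X : CohSpace) : #X.dual.web = #X.web := rfl

@[simp]
lemma mk_web_tens (X Y : CohSpace) : #(X.tens Y).web = #X.web * #Y.web :=
  (mul_def _ _).symm

@[simp]
lemma mk_web_sum (X Y : CohSpace) : #(X.sum Y).web = #X.web + #Y.web :=
  (add_def _ _).symm

@[simp]
lemma mk_web_withc (X Y : CohSpace) : #(X.withc Y).web = #X.web + #Y.web := by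
  simp [withc]

end CohSpace

@[simp]
lemma mk_web_oneCoh : #oneCoh.web = 1 := mk_punit

@[simp]
lemma mk_web_topCoh : #topCoh.web = 0 := mk_eq_zero Empty

@[simp]
lemma mk_web_starCoh (A B : CohSpace) :
    #(starCoh A B).web = (#A.web + 1) * (#B.web + 1) := by
  simp [starCoh]

lemma CohIso.mk_web_eq {A B : CohSpace} (h : CohIso A B) : #A.web = #B.web :=
  let ⟨e, _⟩ := h
  mk_congr e

theorem stmt18 :
    Nat.card ((starCoh (starCoh oneCoh oneCoh) topCoh).web) = 5 ∧
    Nat.card ((starCoh oneCoh (starCoh oneCoh topCoh)).web) = 6 ∧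
    ¬ CohIso (starCoh (starCoh oneCoh oneCoh) topCoh)
        (starCoh oneCoh (starCoh oneCoh topCoh)) := by
  have h5 : #(starCoh (starCoh oneCoh oneCoh) topCoh).web = 5 := by
    simp only [mk_web_starCoh, mk_web_oneCoh, mk_web_topCoh]
    norm_num
  have h6 : #(starCoh oneCoh (starCoh oneCoh topCoh)).web = 6 := by
    simp only [mk_web_starCoh, mk_web_oneCoh, mk_web_topCoh]
    norm_num
  refine ⟨by simp [Nat.card, h5], by simp [Nat.card, h6], fun h => ?_⟩
  have h56 : (5 : Cardinal) = 6 := h5.symm.trans (h.mk_web_eq.trans h6)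
  norm_num at h56
end
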